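/- arXiv:1711.04020 — 2 statements merged into one kernel-verified Lean document; each statement's English description precedes it below -/
import Mathlib

section
/- If F is a homeomorphism of the plane ℝ² commuting with the translations S:(x,y)↦(x+1,y) and T:(x,y)↦(x,y+1), then the classical Misiurewicz–Ziemian rotation set of F (the set of limits of (F^{n_k}(z_k)-z_k)/n_k with n_k→∞) coincides with the rotation set ρ_{S,T}(F) defined via compact sets: the set of vectors w such that there exist a compact K⊂ℝ² and a sequence (m_k,n_k,p_k)∈ℤ³ tending to infinity with S^{-m_k}T^{-n_k}F^{p_k}(K)∩K ≠ ∅ and (m_k/p_k, n_k/p_k) → w. -/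
open Filter Topology Pointwise

noncomputable section

/-- Natural iterates of a homeomorphism. -/
def hnpow {X : Type*} [TopologicalSpace X] (F : X ≃ₜ X) : ℕ → X ≃ₜ X
  | 0 => Homeomorph.refl X
  | n + 1 => (hnpow F n).trans F

/-- Integer iterates of a homeomorphism. -/
def hzpow {X : Type*} [TopologicalSpace X] (F : X ≃ₜ X) : ℤ → X ≃ₜ X
  | Int.ofNat n => hnpow F n
  | Int.negSucc n => hnpow F.symm (n + 1)

/-- `act U V G m n p = U^{-m} ∘ V^{-n} ∘ G^{p}`. -/
def act {X : Type*} [TopologicalSpace X] (U V G : X ≃ₜ X) (m n p : ℤ) : X ≃ₜ X :=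
  ((hzpow G p).trans (hzpow V (-n))).trans (hzpow U (-m))

/-- A sequence in `ℤ³` tends to infinity. -/
def tendsInfty (s : ℕ → ℤ × ℤ × ℤ) : Prop :=
  Tendsto (fun k => |(s k).1| + |(s k).2.1| + |(s k).2.2|) atTop atTop

/-- The rotation set of `G` with respect to `U` and `V`, defined via compact sets:
`w` belongs to it iff there are a compact `K` and `(m_k, n_k, p_k) ∈ ℤ³` tending to infinity
with `U^{-m_k} V^{-n_k} G^{p_k}(K) ∩ K ≠ ∅` and `(m_k/p_k, n_k/p_k) → w`. -/
def rotSet {X : Type*} [TopologicalSpace X] (G U V : X ≃ₜ X) : Set (ℝ × ℝ) :=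
  {w | ∃ K : Set X, IsCompact K ∧ ∃ s : ℕ → ℤ × ℤ × ℤ,
    (∀ k, ((act U V G (s k).1 (s k).2.1 (s k).2.2) '' K ∩ K).Nonempty) ∧
    tendsInfty s ∧
    Tendsto (fun k => ((((s k).1 : ℝ) / ((s k).2.2 : ℝ), ((s k).2.1 : ℝ) / ((s k).2.2 : ℝ)) : ℝ × ℝ))
      atTop (nhds w)}

/-- Two homeomorphisms commute. -/
def commuting {X : Type*} [TopologicalSpace X] (F G : X ≃ₜ X) : Prop := ∀ x, F (G x) = G (F x)

/-- The unit horizontal translation `S : (x,y) ↦ (x+1,y)`. -/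
def S2 : (ℝ × ℝ) ≃ₜ (ℝ × ℝ) := Homeomorph.addRight ((1 : ℝ), (0 : ℝ))

/-- The unit vertical translation `T : (x,y) ↦ (x,y+1)`. -/
def T2 : (ℝ × ℝ) ≃ₜ (ℝ × ℝ) := Homeomorph.addRight ((0 : ℝ), (1 : ℝ))

/-- The displacement set `D(H) = {H(z) - z : z ∈ ℝ²}`. -/
def disp (H : (ℝ × ℝ) ≃ₜ (ℝ × ℝ)) : Set (ℝ × ℝ) := Set.range fun z => H z - z

/-- `mk2 F a b c = S^a ∘ T^b ∘ F^{-c}`. -/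
def mk2 (F : (ℝ × ℝ) ≃ₜ (ℝ × ℝ)) (a b c : ℤ) : (ℝ × ℝ) ≃ₜ (ℝ × ℝ) :=
  ((hzpow F (-c)).trans (hzpow T2 b)).trans (hzpow S2 a)

/-- The projective action of an integer 3×3 matrix in the affine chart. -/
def lhatZ (L : Matrix (Fin 3) (Fin 3) ℤ) (p : ℝ × ℝ) : ℝ × ℝ :=
  (((L 0 0 : ℝ) * p.1 + (L 0 1 : ℝ) * p.2 + (L 0 2 : ℝ)) /
      ((L 2 0 : ℝ) * p.1 + (L 2 1 : ℝ) * p.2 + (L 2 2 : ℝ)),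
   ((L 1 0 : ℝ) * p.1 + (L 1 1 : ℝ) * p.2 + (L 1 2 : ℝ)) /
      ((L 2 0 : ℝ) * p.1 + (L 2 1 : ℝ) * p.2 + (L 2 2 : ℝ)))

/-- The classical Misiurewicz–Ziemian rotation set of `F`. -/
def classicalRot (F : (ℝ × ℝ) ≃ₜ (ℝ × ℝ)) : Set (ℝ × ℝ) :=
  {w | ∃ z : ℕ → ℝ × ℝ, ∃ n : ℕ → ℕ, Tendsto n atTop atTop ∧
    Tendsto (fun k => ((n k : ℝ))⁻¹ • ((hnpow F (n k)) (z k) - z k)) atTop (nhds w)}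

/-!
Write the condition `S^{-m} T^{-n} F^p(x) = y` as `F^p(x) - (m, n) = y`. Since `F` commutes with
the integer translations, so does every `F^p`; hence for `p < 0` also `F^{|p|}(y) = x - (m, n)`.
So one of `x`, `y` is displaced by `F^{|p|}` by `±((m, n) + (y - x))`, and its classical ratio
differs from `(m/p, n/p)` by `(y - x)/p`, which vanishes as `|p| → ∞` when `x, y` stay in a compact
set. Conversely, translating a point into the unit square `K = [0,1]²` does not change its
displacement, and translating its image back into `K` produces the integers `m, n`. Finally
`(m_k, n_k, p_k) → ∞` forces `|p_k| → ∞`: for `p` in a bounded range, `F^p(K) - K` is bounded.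
-/

theorem Homeomorph.zpow_addRight_apply {G : Type*} [TopologicalSpace G] [AddGroup G]
    [ContinuousAdd G] (v : G) (a : ℤ) (x : G) : (Homeomorph.addRight v ^ a) x = x + a • v := by
  induction a using Int.induction_on generalizing x with
  | zero => simp
  | succ a ih =>
    rw [zpow_add_one, Homeomorph.mul_apply, ih, Homeomorph.coe_addRight, add_assoc,
      ← one_add_zsmul, add_comm (1 : ℤ)]
  | pred a ih =>
    rw [zpow_sub_one, Homeomorph.mul_apply, ih, Homeomorph.inv_apply, Homeomorph.addRight_symm,
      Homeomorph.coe_addRight, add_assoc, sub_eq_neg_add, add_zsmul, neg_one_zsmul]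

theorem tendsto_add_inv_smul_of_norm_le {E ι : Type*} [NormedAddCommGroup E] [NormedSpace ℝ E]
    {l : Filter ι} {f e : ι → E} {p : ι → ℝ} {w : E} {C : ℝ} (hf : Tendsto f l (𝓝 w))
    (hp : Tendsto (fun k => |p k|) l atTop) (he : ∀ k, ‖e k‖ ≤ C) :
    Tendsto (fun k => f k + (p k)⁻¹ • e k) l (𝓝 w) := by
  have hp' : Tendsto (fun k => (p k)⁻¹) l (𝓝 0) :=
    tendsto_zero_iff_norm_tendsto_zero.2 (by
      simp only [norm_inv, Real.norm_eq_abs]; exact hp.inv_tendsto_atTop)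
  simpa using hf.add (hp'.zero_smul_isBoundedUnder_le (isBoundedUnder_of ⟨C, he⟩))

theorem norm_sub_le_of_mem {E : Type*} [SeminormedAddGroup E] {K : Set E} {R : ℝ}
    (hR : ∀ x ∈ K, ‖x‖ ≤ R) {x y : E} (hx : x ∈ K) (hy : y ∈ K) : ‖x - y‖ ≤ R + R :=
  (norm_sub_le x y).trans (add_le_add (hR x hx) (hR y hy))

section Iterates

variable {X : Type*} [TopologicalSpace X]

theorem hnpow_eq_pow (F : X ≃ₜ X) (n : ℕ) : hnpow F n = F ^ n := by
  induction n with
  | zero => rfl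
  | succ n ih => rw [pow_succ', ← ih]; rfl

theorem hzpow_eq_zpow (F : X ≃ₜ X) : ∀ p : ℤ, hzpow F p = F ^ p
  | Int.ofNat n => hnpow_eq_pow F n
  | Int.negSucc n => by
    rw [zpow_negSucc, ← inv_pow, ← hnpow_eq_pow]; rfl

theorem act_eq_mul (U V G : X ≃ₜ X) (m n p : ℤ) :
    act U V G m n p = U ^ (-m) * V ^ (-n) * G ^ p := by
  simp only [act, hzpow_eq_zpow, mul_assoc]; rfl

theorem commuting_iff_commute (F G : X ≃ₜ X) : commuting F G ↔ Commute F G := by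
  simp only [commuting, Commute, SemiconjBy, Homeomorph.ext_iff, Homeomorph.mul_apply]

end Iterates

theorem exists_sub_intVec_mem_Icc (v : ℝ × ℝ) :
    ∃ a b : ℤ, v - ((a : ℝ), (b : ℝ)) ∈ Set.Icc (0 : ℝ × ℝ) 1 :=
  ⟨⌊v.1⌋, ⌊v.2⌋, ⟨Int.fract_nonneg v.1, Int.fract_nonneg v.2⟩,
    (Int.fract_lt_one v.1).le, (Int.fract_lt_one v.2).le⟩

theorem zpow_S2_mul_zpow_T2_apply (a b : ℤ) (x : ℝ × ℝ) :
    (S2 ^ a * T2 ^ b) x = x + ((a : ℝ), (b : ℝ)) := by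
  simp only [S2, T2, Homeomorph.mul_apply, Homeomorph.zpow_addRight_apply]
  ext <;> simp [add_assoc]

theorem act_S2_T2_apply (F : (ℝ × ℝ) ≃ₜ (ℝ × ℝ)) (m n p : ℤ) (x : ℝ × ℝ) :
    act S2 T2 F m n p x = (F ^ p) x - ((m : ℝ), (n : ℝ)) := by
  rw [act_eq_mul, Homeomorph.mul_apply, zpow_S2_mul_zpow_T2_apply, sub_eq_add_neg]
  simp

section Lift

variable {F : (ℝ × ℝ) ≃ₜ (ℝ × ℝ)}

theorem apply_add_intVec (hS : Commute F S2) (hT : Commute F T2) (a b : ℤ) (x : ℝ × ℝ) :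
    F (x + ((a : ℝ), (b : ℝ))) = F x + ((a : ℝ), (b : ℝ)) := by
  have h := DFunLike.congr_fun ((hS.zpow_right a).mul_right (hT.zpow_right b)).eq x
  rwa [Homeomorph.mul_apply, Homeomorph.mul_apply _ F, zpow_S2_mul_zpow_T2_apply,
    zpow_S2_mul_zpow_T2_apply] at h

theorem natAbs_displacement (hS : Commute F S2) (hT : Commute F T2) {m n p : ℤ} {x y : ℝ × ℝ}
    (hy : act S2 T2 F m n p x = y) :
    (p.natAbs : ℝ)⁻¹ • ((F ^ p.natAbs) (if 0 ≤ p then x else y) - if 0 ≤ p then x else y) =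
      ((m : ℝ) / p, (n : ℝ) / p) + (p : ℝ)⁻¹ • (y - x) := by
  rw [act_S2_T2_apply] at hy
  rcases le_or_gt 0 p with hp | hp
  · lift p to ℕ using hp
    simp only [Nat.cast_nonneg, if_true, Int.natAbs_natCast, zpow_natCast, Int.cast_natCast]
      at hy ⊢
    rw [← hy]
    ext <;> simp <;> ring
  · obtain ⟨N, rfl⟩ : ∃ N : ℕ, p = -N := ⟨p.natAbs, by omega⟩
    have hFy : (F ^ N) y = x - ((m : ℝ), (n : ℝ)) := by
      have h := apply_add_intVec (hS.pow_left N) (hT.pow_left N) (-m) (-n) ((F ^ (-(N : ℤ))) x)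
      rw [← hy]
      convert h using 2 <;> simp [zpow_neg, sub_eq_add_neg]
    have hN : (N : ℝ) ≠ 0 := by exact_mod_cast (by omega : N ≠ 0)
    simp only [show ¬ (0 : ℤ) ≤ -N by omega, if_false, Int.natAbs_neg, Int.natAbs_natCast, hFy,
      Int.cast_neg, Int.cast_natCast]
    ext <;> simp <;> field_simp <;> ring

theorem tendsto_abs_exponent_atTop {K : Set (ℝ × ℝ)} (hK : IsCompact K) {s : ℕ → ℤ × ℤ × ℤ}
    (hs : tendsInfty s) {x : ℕ → ℝ × ℝ} (hx : ∀ k, x k ∈ K)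
    (hy : ∀ k, act S2 T2 F (s k).1 (s k).2.1 (s k).2.2 (x k) ∈ K) :
    Tendsto (fun k => |(s k).2.2|) atTop atTop := by
  refine tendsto_atTop.2 fun B => ?_
  obtain ⟨C, hC⟩ := ((Finset.Icc (-B) B).isCompact_biUnion fun q _ =>
    hK.image (F ^ q).continuous).isBounded.exists_norm_le
  obtain ⟨R, hR⟩ := hK.isBounded.exists_norm_le
  filter_upwards [(tendsto_intCast_atTop_atTop.comp hs).eventually_gt_atTop (2 * (C + R) + B)]
    with k hk
  simp only [Function.comp_apply, Int.cast_add, Int.cast_abs] at hk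
  have hyk := hy k
  generalize s k = t at hk hyk ⊢
  obtain ⟨m, n, p⟩ := t
  by_contra! hpB
  have hmn : ‖((m : ℝ), (n : ℝ))‖ ≤ C + R := by
    have hFx : ‖(F ^ p) (x k)‖ ≤ C :=
      hC _ (Set.mem_biUnion (Finset.mem_Icc.2 (abs_le.1 hpB.le)) ⟨x k, hx k, rfl⟩)
    calc ‖((m : ℝ), (n : ℝ))‖ = ‖(F ^ p) (x k) - act S2 T2 F m n p (x k)‖ := by
          rw [act_S2_T2_apply, sub_sub_cancel]
      _ ≤ C + R := (norm_sub_le _ _).trans (add_le_add hFx (hR _ hyk))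
  have hm : |(m : ℝ)| ≤ C + R := (norm_fst_le _).trans hmn
  have hn : |(n : ℝ)| ≤ C + R := (norm_snd_le _).trans hmn
  have hp : |(p : ℝ)| ≤ B := by exact_mod_cast hpB.le
  linarith

theorem classicalRot_subset_rotSet (hS : Commute F S2) (hT : Commute F T2) :
    classicalRot F ⊆ rotSet F S2 T2 := by
  rintro w ⟨z, n, hn, hw⟩
  have hstep : ∀ k, ∃ x ∈ Set.Icc (0 : ℝ × ℝ) 1, ∃ a b : ℤ,
      act S2 T2 F a b (n k) x ∈ Set.Icc (0 : ℝ × ℝ) 1 ∧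
      (F ^ n k) (z k) - z k = (F ^ n k) x - x := by
    intro k
    obtain ⟨c, d, hx⟩ := exists_sub_intVec_mem_Icc (z k)
    obtain ⟨a, b, hy⟩ := exists_sub_intVec_mem_Icc ((F ^ n k) (z k - ((c : ℝ), (d : ℝ))))
    refine ⟨_, hx, a, b, by rwa [act_S2_T2_apply, zpow_natCast], ?_⟩
    conv_lhs => rw [← sub_add_cancel (z k) ((c : ℝ), (d : ℝ))]
    rw [apply_add_intVec (hS.pow_left _) (hT.pow_left _), add_sub_add_right_eq_sub]
  choose x hxQ a b hyQ hdisp using hstep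
  obtain ⟨R, hR⟩ := (isCompact_Icc (a := (0 : ℝ × ℝ)) (b := 1)).isBounded.exists_norm_le
  refine ⟨Set.Icc 0 1, isCompact_Icc, fun k => (a k, b k, n k),
    fun k => ⟨_, ⟨x k, hxQ k, rfl⟩, hyQ k⟩, ?_, ?_⟩
  · refine tendsto_atTop_mono (fun k => ?_) (tendsto_natCast_atTop_atTop.comp hn)
    simp only [Function.comp_apply, Nat.abs_cast, le_add_iff_nonneg_left]
    positivity
  · have hn' : Tendsto (fun k => |(n k : ℝ)|) atTop atTop := by
      simpa only [Function.comp_def, Nat.abs_cast] using tendsto_natCast_atTop_atTop.comp hn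
    refine (tendsto_add_inv_smul_of_norm_le hw hn'
      fun k => norm_sub_le_of_mem hR (hxQ k) (hyQ k)).congr fun k => ?_
    have h := natAbs_displacement hS hT (rfl : act S2 T2 F (a k) (b k) (n k) (x k) = _)
    simp only [Nat.cast_nonneg, if_true, Int.natAbs_natCast, Int.cast_natCast] at h
    rw [hnpow_eq_pow, hdisp, h, add_assoc, ← smul_add, sub_add_sub_cancel, sub_self, smul_zero,
      add_zero, Int.cast_natCast]

theorem rotSet_subset_classicalRot (hS : Commute F S2) (hT : Commute F T2) :
    rotSet F S2 T2 ⊆ classicalRot F := by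
  rintro w ⟨K, hK, s, hne, hs, hw⟩
  choose y hy using hne
  choose x hxK hxy using fun k => (hy k).1
  have hp := tendsto_abs_exponent_atTop hK hs hxK fun k => hxy k ▸ (hy k).2
  obtain ⟨R, hR⟩ := hK.isBounded.exists_norm_le
  refine ⟨fun k => if 0 ≤ (s k).2.2 then x k else y k, fun k => (s k).2.2.natAbs,
    (tendsto_natCast_atTop_iff (R := ℤ)).1 (by simpa only [Int.natCast_natAbs] using hp), ?_⟩
  have hp' : Tendsto (fun k => |((s k).2.2 : ℝ)|) atTop atTop := by
    simpa only [Function.comp_def, Int.cast_abs] using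
      (tendsto_intCast_atTop_atTop (R := ℝ)).comp hp
  refine (tendsto_add_inv_smul_of_norm_le hw hp'
    fun k => norm_sub_le_of_mem hR (hy k).2 (hxK k)).congr fun k => ?_
  rw [hnpow_eq_pow, natAbs_displacement hS hT (hxy k)]

end Lift

/-- the classical rotation set coincides with the one defined via compact sets. -/
theorem stmt0 (F : (ℝ × ℝ) ≃ₜ (ℝ × ℝ)) (hS : commuting F S2) (hT : commuting F T2) :
    classicalRot F = rotSet F S2 T2 := by
  rw [commuting_iff_commute] at hS hT
  exact (classicalRot_subset_rotSet hS hT).antisymm (rotSet_subset_classicalRot hS hT)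
end
end

section
/- Let F be a homeomorphism of ℝ² commuting with the unit translations S,T, and let L ∈ SL(3,ℤ) with inverse matrix L⁻¹ = (aᵢ, bᵢ, cᵢ)ᵢ₌₁,₂,₃ (columns). Assume the rotation set ρ_{S,T}(F) is disjoint from the line Φ L⁻¹(Δ_∞), where Δ_∞ is the line at infinity of ℝℙ² and Φ:[x:y:z]↦(x/z,y/z) is the affine chart. Define U = S^{a₁}T^{b₁}F^{-c₁} and V = S^{a₂}T^{b₂}F^{-c₂}. Then the ℤ²-action on ℝ² generated by U and V is properly discontinuous: for every compact K ⊂ ℝ², the set {(m,n) ∈ ℤ² : U^m V^n(K) ∩ K ≠ ∅} is finite. -/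
open Filter Topology Pointwise

noncomputable section

variable {X : Type*} [TopologicalSpace X]

lemma hnpow_perm (F : X ≃ₜ X) (n : ℕ) : (hnpow F n).toEquiv = (F.toEquiv : Equiv.Perm X)^n := by
  induction n with
  | zero => rfl
  | succ n ih =>
    have : (hnpow F (n+1)).toEquiv = F.toEquiv * (hnpow F n).toEquiv := rfl
    rw [this, ih, pow_succ']

lemma hzpow_perm (F : X ≃ₜ X) (p : ℤ) : (hzpow F p).toEquiv = (F.toEquiv : Equiv.Perm X)^p := by
  cases p with
  | ofNat n => show (hnpow F n).toEquiv = _; rw [hnpow_perm]; rfl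
  | negSucc n =>
    show (hnpow F.symm (n+1)).toEquiv = _
    rw [hnpow_perm]
    have h : (F.symm.toEquiv : Equiv.Perm X) = (F.toEquiv)⁻¹ := rfl
    rw [h, inv_pow, zpow_negSucc]

lemma hzpow_apply (F : X ≃ₜ X) (p : ℤ) (x : X) :
    hzpow F p x = ((F.toEquiv : Equiv.Perm X)^p) x := by
  rw [show (hzpow F p x : X) = (hzpow F p).toEquiv x from rfl, hzpow_perm]

section Triple
variable {G : Type*} [Group G] {s t f : G}

lemma triple_mul (hst : Commute s t) (hsf : Commute s f) (htf : Commute t f)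
    (a b c a' b' c' : ℤ) :
    (s^a*t^b*f^c) * (s^a'*t^b'*f^c') = s^(a+a')*(t^(b+b')*f^(c+c')) := by
  have h1 : Commute (t^b*f^c) (s^a') :=
    ((hst.symm.zpow_zpow b a').mul_left (hsf.symm.zpow_zpow c a'))
  have h2 : Commute (f^c) (t^b') := htf.symm.zpow_zpow c b'
  calc (s^a*t^b*f^c) * (s^a'*t^b'*f^c')
      = (s^a*(t^b*f^c)) * (s^a'*(t^b'*f^c')) := by
        simp only [mul_assoc]
    _ = (s^a*s^a')*((t^b*f^c)*(t^b'*f^c')) := h1.mul_mul_mul_comm _ _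
    _ = (s^a*s^a')*((t^b*t^b')*(f^c*f^c')) := by rw [h2.mul_mul_mul_comm]
    _ = s^(a+a')*(t^(b+b')*f^(c+c')) := by rw [← zpow_add, ← zpow_add, ← zpow_add]

lemma triple_zpow (hst : Commute s t) (hsf : Commute s f) (htf : Commute t f)
    (a b c m : ℤ) :
    (s^a*t^b*f^c)^m = s^(a*m)*(t^(b*m)*f^(c*m)) := by
  have h1 : Commute (s^a) (t^b*f^c) :=
    ((hst.zpow_zpow a b).mul_right (hsf.zpow_zpow a c))
  have h2 : Commute (t^b) (f^c) := htf.zpow_zpow b c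
  rw [mul_assoc, h1.mul_zpow, h2.mul_zpow, ← zpow_mul, ← zpow_mul, ← zpow_mul]

end Triple


lemma hzpow_addRight (v : ℝ × ℝ) (p : ℤ) (x : ℝ × ℝ) :
    hzpow (Homeomorph.addRight v) p x = x + p • v := by
  have hnat : ∀ (n : ℕ) (x : ℝ × ℝ), hnpow (Homeomorph.addRight v) n x = x + n • v := by
    intro n
    induction n with
    | zero => intro x; simp [hnpow]
    | succ n ih =>
      intro x
      show Homeomorph.addRight v (hnpow (Homeomorph.addRight v) n x) = _
      rw [ih]
      show x + n • v + v = x + (n+1 : ℕ) • v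
      rw [add_nsmul, one_nsmul, add_assoc]
  have hnat' : ∀ (n : ℕ) (x : ℝ × ℝ), hnpow (Homeomorph.addRight v).symm n x = x - n • v := by
    intro n
    induction n with
    | zero => intro x; simp [hnpow]
    | succ n ih =>
      intro x
      show (Homeomorph.addRight v).symm (hnpow (Homeomorph.addRight v).symm n x) = _
      rw [ih]
      show x - n • v - v = x - (n+1 : ℕ) • v
      rw [add_nsmul, one_nsmul, sub_sub]
  cases p with
  | ofNat n => show hnpow _ n x = _; rw [hnat]; norm_num
  | negSucc n =>
    show hnpow _ (n+1) x = _
    rw [hnat', Int.negSucc_eq, neg_smul, sub_eq_add_neg]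
    congr 2

lemma hzpow_S2 (p : ℤ) (x : ℝ × ℝ) : hzpow S2 p x = x + ((p : ℝ), 0) := by
  rw [show S2 = Homeomorph.addRight ((1:ℝ),(0:ℝ)) from rfl, hzpow_addRight]
  congr 1
  simp [Prod.smul_def]

lemma hzpow_T2 (p : ℤ) (x : ℝ × ℝ) : hzpow T2 p x = x + (0, (p : ℝ)) := by
  rw [show T2 = Homeomorph.addRight ((0:ℝ),(1:ℝ)) from rfl, hzpow_addRight]
  congr 1
  simp [Prod.smul_def]


lemma commuting.perm {F G : X ≃ₜ X} (h : commuting F G) :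
    Commute (F.toEquiv : Equiv.Perm X) G.toEquiv := Equiv.ext fun x => h x

lemma commuting_hzpow {F G : X ≃ₜ X} (h : commuting F G) (p : ℤ) (x : X) :
    F (hzpow G p x) = hzpow G p (F x) := by
  have hc : (F.toEquiv : Equiv.Perm X) * (G.toEquiv ^ p) = (G.toEquiv ^ p) * F.toEquiv :=
    h.perm.zpow_right p
  rw [hzpow_apply, hzpow_apply]
  exact congrArg (fun e : Equiv.Perm _ => e x) hc

lemma commuting_S2T2 : commuting S2 T2 := by
  intro x
  show (x + ((0:ℝ),(1:ℝ))) + ((1:ℝ),(0:ℝ)) = (x + ((1:ℝ),(0:ℝ))) + ((0:ℝ),(1:ℝ))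
  rw [add_assoc, add_assoc, add_comm ((0:ℝ),(1:ℝ))]

lemma F_periodic {F : (ℝ×ℝ) ≃ₜ (ℝ×ℝ)} (hS : commuting F S2) (hT : commuting F T2)
    (z : ℝ×ℝ) (m n : ℤ) : F (z + ((m:ℝ),(n:ℝ))) = F z + ((m:ℝ),(n:ℝ)) := by
  have h1 : z + ((m:ℝ),(n:ℝ)) = hzpow S2 m (hzpow T2 n z) := by
    rw [hzpow_T2, hzpow_S2, add_assoc]
    congr 1
    exact Prod.ext (by simp) (by simp)
  rw [h1, commuting_hzpow hS, commuting_hzpow hT, hzpow_T2, hzpow_S2, add_assoc]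
  congr 1
  exact Prod.ext (by simp) (by simp)

lemma disp_bound {F : (ℝ×ℝ) ≃ₜ (ℝ×ℝ)} (hS : commuting F S2) (hT : commuting F T2) :
    ∃ C : ℝ, 0 ≤ C ∧ ∀ z, ‖F z - z‖ ≤ C := by
  have hcont : Continuous (fun z : ℝ×ℝ => F z - z) := F.continuous.sub continuous_id
  have hcomp : IsCompact ((fun z : ℝ×ℝ => F z - z) '' Set.Icc ((0:ℝ),(0:ℝ)) (1,1)) :=
    (isCompact_Icc).image hcont
  obtain ⟨C, hC⟩ := hcomp.isBounded.exists_norm_le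
  refine ⟨max C 0, le_max_right _ _, fun z => ?_⟩
  set z0 : ℝ×ℝ := (Int.fract z.1, Int.fract z.2) with hz0def
  have hz0 : z0 ∈ Set.Icc ((0:ℝ),(0:ℝ)) (1,1) := by
    constructor
    · exact Prod.mk_le_mk.2 ⟨Int.fract_nonneg _, Int.fract_nonneg _⟩
    · exact Prod.mk_le_mk.2 ⟨(Int.fract_lt_one _).le, (Int.fract_lt_one _).le⟩
  have hz : z = z0 + ((⌊z.1⌋:ℝ), (⌊z.2⌋:ℝ)) := by
    refine Prod.ext ?_ ?_
    · show z.1 = Int.fract z.1 + (⌊z.1⌋:ℝ)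
      rw [Int.fract]; ring
    · show z.2 = Int.fract z.2 + (⌊z.2⌋:ℝ)
      rw [Int.fract]; ring
  have key : F z - z = F z0 - z0 := by
    conv_lhs => rw [hz]
    rw [F_periodic hS hT]
    abel
  rw [key]
  exact le_max_of_le_left (hC _ (Set.mem_image_of_mem _ hz0))

lemma hnpow_disp_bound {G : (ℝ×ℝ) ≃ₜ (ℝ×ℝ)} {C : ℝ} (hG : ∀ z, ‖G z - z‖ ≤ C) :
    ∀ (n : ℕ) (z), ‖hnpow G n z - z‖ ≤ C * n := by
  intro n
  induction n with
  | zero => intro z; simp [hnpow]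
  | succ n ih =>
    intro z
    show ‖G (hnpow G n z) - z‖ ≤ C * (n+1 : ℕ)
    calc ‖G (hnpow G n z) - z‖
        ≤ ‖G (hnpow G n z) - hnpow G n z‖ + ‖hnpow G n z - z‖ := norm_sub_le_norm_sub_add_norm_sub _ _ _
      _ ≤ C + C * n := add_le_add (hG _) (ih z)
      _ = C * (n+1 : ℕ) := by push_cast; ring

lemma hzpow_disp_bound {F : (ℝ×ℝ) ≃ₜ (ℝ×ℝ)} {C : ℝ} (hF : ∀ z, ‖F z - z‖ ≤ C) :
    ∀ (p : ℤ) (z), ‖hzpow F p z - z‖ ≤ C * |(p:ℝ)| := by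
  have hFs : ∀ z, ‖F.symm z - z‖ ≤ C := by
    intro z
    have : F.symm z - z = -(F (F.symm z) - F.symm z) := by
      rw [F.apply_symm_apply]; abel
    rw [this, norm_neg]
    exact hF _
  intro p z
  cases p with
  | ofNat n =>
    show ‖hnpow F n z - z‖ ≤ C * |((Int.ofNat n : ℤ) : ℝ)|
    have h2 : |((Int.ofNat n : ℤ) : ℝ)| = (n:ℝ) := by
      rw [Int.ofNat_eq_natCast, Int.cast_natCast, abs_of_nonneg (Nat.cast_nonneg n)]
    rw [h2]; exact hnpow_disp_bound hF n z
  | negSucc n =>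
    show ‖hnpow F.symm (n+1) z - z‖ ≤ C * |((Int.negSucc n : ℤ) : ℝ)|
    have h2 : |((Int.negSucc n : ℤ) : ℝ)| = ((n+1 : ℕ) : ℝ) := by
      rw [Int.cast_negSucc, abs_neg, abs_of_nonneg (by positivity)]
    rw [h2]; exact hnpow_disp_bound hFs (n+1) z

section Triple2
variable {G : Type*} [Group G] {s t f : G}

lemma triple_mul' (hst : Commute s t) (hsf : Commute s f) (htf : Commute t f)
    (a b c a' b' c' : ℤ) :
    (s^a*(t^b*f^c)) * (s^a'*(t^b'*f^c')) = s^(a+a')*(t^(b+b')*f^(c+c')) := by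
  rw [← mul_assoc (s^a), ← mul_assoc (s^a'), triple_mul hst hsf htf]

lemma triple_zpow' (hst : Commute s t) (hsf : Commute s f) (htf : Commute t f)
    (a b c m : ℤ) :
    (s^a*(t^b*f^c))^m = s^(a*m)*(t^(b*m)*f^(c*m)) := by
  rw [← mul_assoc (s^a), triple_zpow hst hsf htf]

end Triple2


lemma mk2_perm (F : (ℝ × ℝ) ≃ₜ (ℝ × ℝ)) (a b c : ℤ) : (mk2 F a b c).toEquiv =
    (S2.toEquiv^a * (T2.toEquiv^b * F.toEquiv^(-c)) : Equiv.Perm (ℝ×ℝ)) := by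
  refine Equiv.ext fun x => ?_
  show hzpow S2 a (hzpow T2 b (hzpow F (-c) x))
      = (S2.toEquiv^a) ((T2.toEquiv^b) ((F.toEquiv^(-c)) x))
  rw [hzpow_apply, hzpow_apply, hzpow_apply]

lemma abs_triple (a b c x y z : ℝ) :
    |a*x+b*y+c*z| ≤ (|a|+|b|+|c|) * (|x|+|y|+|z|) := by
  have h1 : |a*x+b*y+c*z| ≤ |a| * |x| + |b| * |y| + |c| * |z| := by
    calc |a*x+b*y+c*z| ≤ |a*x+b*y| + |c*z| := abs_add_le _ _
      _ ≤ |a*x| + |b*y| + |c*z| := by linarith [abs_add_le (a*x) (b*y)]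
      _ = |a| * |x| + |b| * |y| + |c| * |z| := by rw [abs_mul, abs_mul, abs_mul]
  refine h1.trans ?_
  have := abs_nonneg a; have := abs_nonneg b; have := abs_nonneg c
  have := abs_nonneg x; have := abs_nonneg y; have := abs_nonneg z
  nlinarith

lemma addpair (x : ℝ×ℝ) (a b : ℝ) : x + ((0:ℝ),b) + (a,(0:ℝ)) = x + (a,b) := by
  refine Prod.ext ?_ ?_ <;> simp

lemma norm_pair (a b : ℝ) : ‖((a,b) : ℝ×ℝ)‖ = max |a| |b| := by
  rw [Prod.norm_def]
  rfl




lemma int_cast_tendsto {g : ℕ → ℤ} (h : Tendsto (fun k => ((g k : ℝ))) atTop atTop) :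
    Tendsto g atTop atTop := by
  rw [tendsto_atTop] at h ⊢
  intro b
  filter_upwards [h (b : ℝ)] with k hk
  exact_mod_cast hk

lemma act_S2T2 (F : (ℝ × ℝ) ≃ₜ (ℝ × ℝ)) (A B E : ℤ) (x : ℝ × ℝ) :
    act S2 T2 F (-A) (-B) (-E) x = hzpow F (-E) x + ((A : ℝ), (B : ℝ)) := by
  show hzpow S2 (-(-A)) (hzpow T2 (-(-B)) (hzpow F (-E) x)) = _
  rw [hzpow_T2, hzpow_S2, addpair]
  push_cast [neg_neg]
  rfl

lemma key_contra (F : (ℝ × ℝ) ≃ₜ (ℝ × ℝ)) (hS : commuting F S2) (hT : commuting F T2)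
    (l0 l1 l2 : ℝ)
    (hdisj : ∀ w ∈ rotSet F S2 T2, l0 * w.1 + l1 * w.2 + l2 ≠ 0)
    (K : Set (ℝ × ℝ)) (hK : IsCompact K)
    (Ms Ns Ps : ℕ → ℤ)
    (hrow : ∀ k, l0 * (Ms k : ℝ) + l1 * (Ns k : ℝ) + l2 * (Ps k : ℝ) = 0)
    (hmem : ∀ k, ∃ x ∈ K, hzpow F (-(Ps k)) x + ((Ms k : ℝ), (Ns k : ℝ)) ∈ K)
    (hinfty : Tendsto (fun k => |(Ms k : ℝ)| + |(Ns k : ℝ)| + |(Ps k : ℝ)|) atTop atTop) :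
    False := by
  obtain ⟨C, hC0, hCb⟩ := disp_bound hS hT
  have hFb := hzpow_disp_bound hCb
  obtain ⟨D, hD⟩ := hK.isBounded.exists_norm_le
  choose x hxK hyK using hmem
  have hD0 : 0 ≤ D := (norm_nonneg (x 0)).trans (hD _ (hxK 0))
  have hMb : ∀ k, |(Ms k : ℝ)| ≤ 2*D + C * |(Ps k : ℝ)| ∧
      |(Ns k : ℝ)| ≤ 2*D + C * |(Ps k : ℝ)| := by
    intro k
    have h1 : ‖(((Ms k : ℝ), (Ns k : ℝ)) : ℝ × ℝ)‖ ≤ 2*D + C * |(Ps k : ℝ)| := by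
      set u : ℝ × ℝ := hzpow F (-(Ps k)) (x k) + ((Ms k : ℝ), (Ns k : ℝ)) with hu
      set v : ℝ × ℝ := hzpow F (-(Ps k)) (x k) - x k with hv
      have heq : ((((Ms k : ℝ), (Ns k : ℝ))) : ℝ × ℝ) = u - v - x k := by
        rw [hu, hv]; abel
      rw [heq]
      have b1 : ‖u‖ ≤ D := hD _ (hyK k)
      have b2 : ‖v‖ ≤ C * |(Ps k : ℝ)| := by
        rw [hv]
        have := hFb (-(Ps k)) (x k)
        rwa [Int.cast_neg, abs_neg] at this
      have b3 : ‖x k‖ ≤ D := hD _ (hxK k)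
      calc ‖u - v - x k‖ ≤ ‖u - v‖ + ‖x k‖ := norm_sub_le _ _
        _ ≤ ‖u‖ + ‖v‖ + ‖x k‖ := by linarith [norm_sub_le u v]
        _ ≤ 2*D + C * |(Ps k : ℝ)| := by linarith
    rw [norm_pair] at h1
    exact ⟨(le_max_left _ _).trans h1, (le_max_right _ _).trans h1⟩
  have hPinf : Tendsto (fun k => |(Ps k : ℝ)|) atTop atTop := by
    have h2 : Tendsto (fun k =>
        ((|(Ms k : ℝ)| + |(Ns k : ℝ)| + |(Ps k : ℝ)|) + (-(4*D)))/(2*C+1)) atTop atTop :=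
      (tendsto_atTop_add_const_right _ _ hinfty).atTop_div_const (by linarith)
    refine tendsto_atTop_mono (fun k => ?_) h2
    have h3 := (hMb k).1
    have h4 := (hMb k).2
    rw [div_le_iff₀ (by linarith : (0:ℝ) < 2*C+1)]
    have := abs_nonneg ((Ps k : ℝ))
    nlinarith
  obtain ⟨k0, hk0⟩ := Filter.eventually_atTop.1 (hPinf.eventually_ge_atTop 1)
  set r : ℕ → ℝ × ℝ := fun k =>
    ((Ms (k+k0) : ℝ)/(Ps (k+k0) : ℝ), (Ns (k+k0) : ℝ)/(Ps (k+k0) : ℝ)) with hrdef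
  have hrb : ∀ k, r k ∈ Metric.closedBall (0 : ℝ × ℝ) (2*D + C) := by
    intro k
    have hp1 : (1:ℝ) ≤ |(Ps (k+k0) : ℝ)| := hk0 _ (Nat.le_add_left _ _)
    rw [Metric.mem_closedBall, dist_zero_right, hrdef]
    rw [norm_pair]
    have hbound : ∀ a : ℝ, |a| ≤ 2*D + C * |(Ps (k+k0) : ℝ)| →
        |a / (Ps (k+k0) : ℝ)| ≤ 2*D + C := by
      intro a ha
      rw [abs_div, div_le_iff₀ (by linarith : (0:ℝ) < |(Ps (k+k0) : ℝ)|)]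
      nlinarith
    exact max_le (hbound _ (hMb _).1) (hbound _ (hMb _).2)
  obtain ⟨w, -, φ, hφ, hwt⟩ := tendsto_subseq_of_bounded Metric.isBounded_closedBall hrb
  have hφt : Tendsto (fun k => φ k + k0) atTop atTop :=
    tendsto_atTop_mono (fun k => le_trans (hφ.le_apply) (Nat.le_add_right _ _)) tendsto_id
  have hwrot : w ∈ rotSet F S2 T2 := by
    refine ⟨K, hK, fun k =>
      (-(Ms (φ k + k0)), -(Ns (φ k + k0)), -(Ps (φ k + k0))), fun k => ?_, ?_, ?_⟩
    · refine ⟨_, ⟨x (φ k + k0), hxK _, rfl⟩, ?_⟩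
      rw [act_S2T2]
      exact hyK _
    · unfold tendsInfty
      apply int_cast_tendsto
      have h5 : Tendsto (fun k =>
          |(Ms (φ k + k0) : ℝ)| + |(Ns (φ k + k0) : ℝ)| + |(Ps (φ k + k0) : ℝ)|)
          atTop atTop := hinfty.comp hφt
      refine h5.congr fun k => ?_
      push_cast [abs_neg]
      ring
    · have heq : (fun k => (((-(Ms (φ k + k0)) : ℤ) : ℝ) / ((-(Ps (φ k + k0)) : ℤ) : ℝ),
          ((-(Ns (φ k + k0)) : ℤ) : ℝ) / ((-(Ps (φ k + k0)) : ℤ) : ℝ))) = r ∘ φ := by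
        funext k
        show _ = r (φ k)
        rw [hrdef]
        dsimp only
        congr 1 <;> push_cast <;> rw [neg_div_neg_eq]
      rw [heq]
      exact hwt
  have hzero : ∀ k, l0 * (r (φ k)).1 + l1 * (r (φ k)).2 + l2 = 0 := by
    intro k
    have hp1 : (1:ℝ) ≤ |(Ps (φ k + k0) : ℝ)| := hk0 _ (Nat.le_add_left _ _)
    have hpne : ((Ps (φ k + k0) : ℝ)) ≠ 0 := by
      intro h
      rw [h] at hp1
      norm_num at hp1
    have hr3 := hrow (φ k + k0)
    rw [hrdef]
    dsimp only
    field_simp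
    linarith [hr3]
  have hlim : Tendsto (fun k => l0 * (r (φ k)).1 + l1 * (r (φ k)).2 + l2) atTop
      (nhds (l0 * w.1 + l1 * w.2 + l2)) := by
    have h1 : Tendsto (r ∘ φ) atTop (nhds w) := hwt
    have hf1 : Tendsto (fun k => (r (φ k)).1) atTop (nhds w.1) :=
      (continuous_fst.tendsto w).comp h1
    have hf2 : Tendsto (fun k => (r (φ k)).2) atTop (nhds w.2) :=
      (continuous_snd.tendsto w).comp h1
    exact ((hf1.const_mul l0).add (hf2.const_mul l1)).add_const l2
  have hzero' : l0 * w.1 + l1 * w.2 + l2 = 0 := by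
    have : Tendsto (fun _ : ℕ => (0:ℝ)) atTop (nhds (l0 * w.1 + l1 * w.2 + l2)) := by
      refine hlim.congr fun k => (hzero k)
    exact (tendsto_nhds_unique this tendsto_const_nhds)
  exact hdisj w hwrot hzero'

def rowMap (M : Matrix (Fin 3) (Fin 3) ℤ) (i : Fin 3) (m n : ℤ) : ℤ := M i 0 * m + M i 1 * n


/-- if the rotation set avoids the line `Φ L⁻¹(Δ_∞)` (i.e. the set where
the third coordinate of `L(x,y,1)` vanishes), the `ℤ²`-action generated by
`U = S^{a₁}T^{b₁}F^{-c₁}`, `V = S^{a₂}T^{b₂}F^{-c₂}` is properly discontinuous. -/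
theorem stmt7 (F : (ℝ × ℝ) ≃ₜ (ℝ × ℝ)) (hS : commuting F S2) (hT : commuting F T2)
    (L M : Matrix (Fin 3) (Fin 3) ℤ) (hdet : L.det = 1) (hLM : L * M = 1) (hML : M * L = 1)
    (hdisj : ∀ w ∈ rotSet F S2 T2,
      (L 2 0 : ℝ) * w.1 + (L 2 1 : ℝ) * w.2 + (L 2 2 : ℝ) ≠ 0)
    (U V : (ℝ × ℝ) ≃ₜ (ℝ × ℝ))
    (hU : U = mk2 F (M 0 0) (M 1 0) (M 2 0)) (hV : V = mk2 F (M 0 1) (M 1 1) (M 2 1)) :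
    ∀ K : Set (ℝ × ℝ), IsCompact K →
      {q : ℤ × ℤ | (((hzpow U q.1) ∘ (hzpow V q.2)) '' K ∩ K).Nonempty}.Finite := by
  intro K hK
  rcases Set.eq_empty_or_nonempty K with hKe | hKne
  · simp [hKe]
  -- entries of L*M
  have hE : ∀ i j : Fin 3, L i 0 * M 0 j + L i 1 * M 1 j + L i 2 * M 2 j
      = if i = j then 1 else 0 := by
    intro i j
    have h : (L * M) i j = (1 : Matrix (Fin 3) (Fin 3) ℤ) i j := by rw [hLM]
    rwa [Matrix.mul_apply, Fin.sum_univ_three, Matrix.one_apply] at h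
  have h00 : L 0 0 * M 0 0 + L 0 1 * M 1 0 + L 0 2 * M 2 0 = 1 := by
    have := hE 0 0; rwa [if_pos rfl] at this
  have h01 : L 0 0 * M 0 1 + L 0 1 * M 1 1 + L 0 2 * M 2 1 = 0 := by
    have := hE 0 1; rwa [if_neg (by decide)] at this
  have h10 : L 1 0 * M 0 0 + L 1 1 * M 1 0 + L 1 2 * M 2 0 = 0 := by
    have := hE 1 0; rwa [if_neg (by decide)] at this
  have h11 : L 1 0 * M 0 1 + L 1 1 * M 1 1 + L 1 2 * M 2 1 = 1 := by
    have := hE 1 1; rwa [if_pos rfl] at this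
  have h20 : L 2 0 * M 0 0 + L 2 1 * M 1 0 + L 2 2 * M 2 0 = 0 := by
    have := hE 2 0; rwa [if_neg (by decide)] at this
  have h21 : L 2 0 * M 0 1 + L 2 1 * M 1 1 + L 2 2 * M 2 1 = 0 := by
    have := hE 2 1; rwa [if_neg (by decide)] at this
  -- commuting perms
  have hst : Commute S2.toEquiv T2.toEquiv := commuting_S2T2.perm
  have hsf : Commute S2.toEquiv F.toEquiv := (hS.perm).symm
  have htf : Commute T2.toEquiv F.toEquiv := (hT.perm).symm
  -- group identity
  have huv : ∀ m n : ℤ, ((U.toEquiv : Equiv.Perm (ℝ × ℝ))^m * V.toEquiv^n)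
      = S2.toEquiv^(rowMap M 0 m n) *
        (T2.toEquiv^(rowMap M 1 m n) * F.toEquiv^(-(rowMap M 2 m n))) := by
    intro m n
    rw [hU, hV, mk2_perm, mk2_perm, triple_zpow' hst hsf htf, triple_zpow' hst hsf htf,
        triple_mul' hst hsf htf]
    have e3 : (-(M 2 0))*m + (-(M 2 1))*n = -(rowMap M 2 m n) := by unfold rowMap; ring
    rw [e3]
    rfl
  -- condition translation
  have hcond : ∀ m n : ℤ, ((((hzpow U m) ∘ (hzpow V n)) '' K ∩ K).Nonempty) →
      ∃ x ∈ K, hzpow F (-(rowMap M 2 m n)) x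
        + ((rowMap M 0 m n : ℝ), (rowMap M 1 m n : ℝ)) ∈ K := by
    rintro m n ⟨y, ⟨x, hxK, hxy⟩, hyK⟩
    refine ⟨x, hxK, ?_⟩
    have hy : y = hzpow F (-(rowMap M 2 m n)) x
        + ((rowMap M 0 m n : ℝ), (rowMap M 1 m n : ℝ)) := by
      rw [← hxy]
      show hzpow U m (hzpow V n x) = _
      rw [hzpow_apply, hzpow_apply]
      have h1 : (U.toEquiv^m) ((V.toEquiv^n) x) = ((U.toEquiv^m * V.toEquiv^n)) x := rfl
      rw [h1, huv m n]
      show (S2.toEquiv^(rowMap M 0 m n))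
        ((T2.toEquiv^(rowMap M 1 m n)) ((F.toEquiv^(-(rowMap M 2 m n))) x)) = _
      rw [← hzpow_apply, ← hzpow_apply, ← hzpow_apply, hzpow_T2, hzpow_S2, addpair]
    rw [← hy]
    exact hyK
  -- constants for lower bound
  set B : ℝ := |(L 0 0 : ℝ)| + |(L 0 1 : ℝ)| + |(L 0 2 : ℝ)|
      + (|(L 1 0 : ℝ)| + |(L 1 1 : ℝ)| + |(L 1 2 : ℝ)|) + 1 with hB
  have hB0 : 0 < B := by positivity
  by_contra hinf
  have hub : ∀ k : ℕ, ∃ q : ℤ × ℤ, ((((hzpow U q.1) ∘ (hzpow V q.2)) '' K ∩ K).Nonempty)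
      ∧ (k : ℝ) < |(q.1 : ℝ)| + |(q.2 : ℝ)| := by
    intro k
    by_contra hcon
    push_neg at hcon
    apply hinf
    refine Set.Finite.subset (((Set.finite_Icc (-(k:ℤ)) k).prod (Set.finite_Icc (-(k:ℤ)) k)))
      (fun q hq => ?_)
    have h1 := hcon q hq
    have ha : |(q.1 : ℝ)| ≤ (k : ℝ) := by
      have := abs_nonneg ((q.2 : ℝ)); linarith
    have hb : |(q.2 : ℝ)| ≤ (k : ℝ) := by
      have := abs_nonneg ((q.1 : ℝ)); linarith
    have ha' : |q.1| ≤ (k : ℤ) := by exact_mod_cast ha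
    have hb' : |q.2| ≤ (k : ℤ) := by exact_mod_cast hb
    exact ⟨Set.mem_Icc.2 (abs_le.1 ha'), Set.mem_Icc.2 (abs_le.1 hb')⟩
  choose q hqmem hqbig using hub
  -- apply the key contradiction
  refine key_contra F hS hT ((L 2 0 : ℤ) : ℝ) ((L 2 1 : ℤ) : ℝ) ((L 2 2 : ℤ) : ℝ) hdisj K hK
    (fun k => rowMap M 0 (q k).1 (q k).2) (fun k => rowMap M 1 (q k).1 (q k).2)
    (fun k => rowMap M 2 (q k).1 (q k).2) ?_ ?_ ?_
  · intro k
    have hz : L 2 0 * rowMap M 0 (q k).1 (q k).2 + L 2 1 * rowMap M 1 (q k).1 (q k).2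
        + L 2 2 * rowMap M 2 (q k).1 (q k).2 = 0 := by
      unfold rowMap
      linear_combination (q k).1 * h20 + (q k).2 * h21
    exact_mod_cast congrArg (fun z : ℤ => (z : ℝ)) hz
  · intro k
    exact hcond _ _ (hqmem k)
  · -- tends to infinity
    have hrec : ∀ k : ℕ, (k : ℝ) / B ≤ |(rowMap M 0 (q k).1 (q k).2 : ℝ)|
        + |(rowMap M 1 (q k).1 (q k).2 : ℝ)| + |(rowMap M 2 (q k).1 (q k).2 : ℝ)| := by
      intro k
      set A : ℝ := |(rowMap M 0 (q k).1 (q k).2 : ℝ)|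
        + |(rowMap M 1 (q k).1 (q k).2 : ℝ)| + |(rowMap M 2 (q k).1 (q k).2 : ℝ)| with hA
      have hA0 : 0 ≤ A := by positivity
      have hm : ((q k).1 : ℤ) = L 0 0 * rowMap M 0 (q k).1 (q k).2
          + L 0 1 * rowMap M 1 (q k).1 (q k).2 + L 0 2 * rowMap M 2 (q k).1 (q k).2 := by
        unfold rowMap
        linear_combination -((q k).1 * h00) - (q k).2 * h01
      have hn : ((q k).2 : ℤ) = L 1 0 * rowMap M 0 (q k).1 (q k).2
          + L 1 1 * rowMap M 1 (q k).1 (q k).2 + L 1 2 * rowMap M 2 (q k).1 (q k).2 := by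
        unfold rowMap
        linear_combination -((q k).1 * h10) - (q k).2 * h11
      have hmr : |((q k).1 : ℝ)| ≤ (|(L 0 0 : ℝ)| + |(L 0 1 : ℝ)| + |(L 0 2 : ℝ)|) * A := by
        have : ((q k).1 : ℝ) = (L 0 0 : ℝ) * (rowMap M 0 (q k).1 (q k).2 : ℝ)
            + (L 0 1 : ℝ) * (rowMap M 1 (q k).1 (q k).2 : ℝ)
            + (L 0 2 : ℝ) * (rowMap M 2 (q k).1 (q k).2 : ℝ) := by exact_mod_cast hm
        rw [this, hA]
        exact abs_triple _ _ _ _ _ _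
      have hnr : |((q k).2 : ℝ)| ≤ (|(L 1 0 : ℝ)| + |(L 1 1 : ℝ)| + |(L 1 2 : ℝ)|) * A := by
        have : ((q k).2 : ℝ) = (L 1 0 : ℝ) * (rowMap M 0 (q k).1 (q k).2 : ℝ)
            + (L 1 1 : ℝ) * (rowMap M 1 (q k).1 (q k).2 : ℝ)
            + (L 1 2 : ℝ) * (rowMap M 2 (q k).1 (q k).2 : ℝ) := by exact_mod_cast hn
        rw [this, hA]
        exact abs_triple _ _ _ _ _ _
      rw [div_le_iff₀ hB0]
      have hq1 := hqbig k
      have hBsplit : (k : ℝ) < B * A := by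
        have e1 : 0 ≤ |(L 0 0 : ℝ)| + |(L 0 1 : ℝ)| + |(L 0 2 : ℝ)| := by positivity
        have e2 : 0 ≤ |(L 1 0 : ℝ)| + |(L 1 1 : ℝ)| + |(L 1 2 : ℝ)| := by positivity
        nlinarith
      linarith [hBsplit]
    refine tendsto_atTop_mono hrec ?_
    exact (tendsto_natCast_atTop_atTop).atTop_div_const hB0
end
end
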